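/- Let A be a real 2k×2k matrix of finite order with no eigenvalue equal to 1. Then det(A − I) > 0. -/

import Mathlib

/-!
A real eigenvalue `t` of a matrix with `A ^ m = 1` satisfies `t ^ m = 1`, so the only candidate
in `[1, ∞)` is `t = 1`, which is excluded. Hence the monic characteristic polynomial has no root
in `[1, ∞)`, and the intermediate value theorem makes it positive at `1`. In even dimension its
value there, `det (1 - A)`, equals `det (A - 1)`.
-/

open Polynomial Filter

theorem Polynomial.Monic.eval_pos_of_forall_ge_not_isRoot {p : ℝ[X]} (hp : p.Monic) {a : ℝ}
    (h : ∀ x, a ≤ x → ¬ p.IsRoot x) : 0 < p.eval a := by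
  rcases Nat.eq_zero_or_pos p.natDegree with hdeg | hdeg
  · simp [hp.natDegree_eq_zero.mp hdeg]
  have htop : Tendsto (fun x => p.eval x) atTop atTop :=
    p.tendsto_atTop_of_leadingCoeff_nonneg (natDegree_pos_iff_degree_pos.mp hdeg)
      (by simp [hp.leadingCoeff])
  obtain ⟨b, hb⟩ := (htop.eventually_ge_atTop 0).exists_forall_of_atTop
  by_contra! hneg
  have hab : a ≤ max a b := le_max_left a b
  obtain ⟨x, hx, hroot⟩ := intermediate_value_Icc hab p.continuous.continuousOn
    ⟨hneg, hb _ (le_max_right a b)⟩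
  exact h x hx.1 hroot

theorem Module.End.HasEigenvalue.pow_eq_one_of_pow_eq_one {K V : Type*} [Field K]
    [AddCommGroup V] [Module K V] {f : Module.End K V} {μ : K} (h : f.HasEigenvalue μ) {m : ℕ}
    (hf : f ^ m = 1) : μ ^ m = 1 := by
  obtain ⟨v, hv⟩ := (h.pow m).exists_hasEigenvector
  have hfix : v = μ ^ m • v := by simpa [hf] using hv.apply_eq_smul
  have : (μ ^ m - 1) • v = 0 := by rw [sub_smul, one_smul, ← hfix, sub_self]
  exact sub_eq_zero.mp ((smul_eq_zero.mp this).resolve_right hv.2)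

theorem Matrix.det_sub_one_eq_eval_charpoly {n R : Type*} [Fintype n] [DecidableEq n]
    [CommRing R] (A : Matrix n n R) (hn : Even (Fintype.card n)) :
    (A - 1).det = A.charpoly.eval 1 := by
  rw [eval_charpoly, scalar_apply, ← neg_sub, det_neg, hn.neg_one_pow, one_mul]
  rfl

/-- A real `2k × 2k` matrix of finite order having no eigenvalue equal to `1`
satisfies `det(A − I) > 0`. -/
theorem det_sub_one_pos_of_finite_order (k : ℕ)
    (A : Matrix (Fin (2 * k)) (Fin (2 * k)) ℝ)
    (m : ℕ) (hm : 0 < m) (hA : A ^ m = 1)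
    (hone : ∀ v : Fin (2 * k) → ℝ, A.mulVec v = v → v = 0) :
    0 < (A - 1).det := by
  rw [A.det_sub_one_eq_eval_charpoly (by simp)]
  refine A.charpoly_monic.eval_pos_of_forall_ge_not_isRoot fun t ht hroot => ?_
  set f : Module.End ℝ (Fin (2 * k) → ℝ) := Matrix.toLinAlgEquiv' A
  have heig : f.HasEigenvalue t := by
    rwa [Module.End.hasEigenvalue_iff_isRoot_charpoly, show f.charpoly = A.charpoly from
      Matrix.charpoly_toLin' A]
  obtain rfl : t = 1 := (pow_eq_one_iff_of_nonneg (by linarith) hm.ne').mp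
    (heig.pow_eq_one_of_pow_eq_one (by rw [← map_pow, hA, map_one]))
  obtain ⟨v, hv⟩ := heig.exists_hasEigenvector
  exact hv.2 (hone v (by simpa [f] using hv.apply_eq_smul))
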